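/- Let G be a group acting by isometries on a metric space (X, d) and let n ∈ ℕ. Then: (1) each set U^∞_m is symmetric; (2) the sequence (U^∞_m)_{m ∈ ℕ} is decreasing and ⋂_m U^∞_m equals the diagonal of (Xⁿ ⫽ G)²; (3) U^∞_{m+1} ∘ U^∞_{m+1} ⊆ U^∞_m for every m, where ∘ denotes composition of relations. -/

import Mathlib

set_option linter.unusedSectionVars false

open Metric MulAction Filter Set Topology Pointwise

section OrbitQuotient

variable (G : Type*) {X : Type*} [Group G] [PseudoMetricSpace X] [MulAction G X]

/-- The distance from a point `x` to the orbit of `y` under the group `G`. -/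
noncomputable def orbDist (x y : X) : ℝ := ⨅ g : G, dist x (g • y)

theorem orbDist_nonneg (x y : X) : 0 ≤ orbDist G x y :=
  Real.iInf_nonneg fun _ => dist_nonneg

theorem orbDist_le (x y : X) (g : G) : orbDist G x y ≤ dist x (g • y) :=
  ciInf_le ⟨0, by rintro r ⟨g, rfl⟩; exact dist_nonneg⟩ g

theorem orbit_nonempty (y : X) : (MulAction.orbit G y).Nonempty :=
  ⟨y, MulAction.mem_orbit_self y⟩

theorem orbDist_eq_infDist (x y : X) : orbDist G x y = Metric.infDist x (MulAction.orbit G y) := by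
  haveI : Nonempty (MulAction.orbit G y) := (orbit_nonempty G y).to_subtype
  rw [Metric.infDist_eq_iInf]
  apply le_antisymm
  · refine le_ciInf fun z => ?_
    obtain ⟨g, hg⟩ := z.2
    have hg' : g • y = (z : X) := hg
    calc orbDist G x y ≤ dist x (g • y) := orbDist_le G x y g
      _ = dist x z := by rw [hg']
  · refine le_ciInf fun g => ?_
    exact ciInf_le ⟨0, by rintro r ⟨z, rfl⟩; exact dist_nonneg⟩
      (⟨g • y, MulAction.mem_orbit y g⟩ : MulAction.orbit G y)

variable [IsIsometricSMul G X]

theorem orbDist_self (x : X) : orbDist G x x = 0 :=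
  le_antisymm (by simpa using orbDist_le G x x 1) (orbDist_nonneg G x x)

theorem orbDist_comm (x y : X) : orbDist G x y = orbDist G y x := by
  have key : ∀ u v : X, orbDist G v u ≤ orbDist G u v := by
    intro u v
    refine le_ciInf fun g => ?_
    calc orbDist G v u ≤ dist v (g⁻¹ • u) := orbDist_le G v u g⁻¹
      _ = dist (g • v) (g • g⁻¹ • u) := (dist_smul g v _).symm
      _ = dist u (g • v) := by rw [smul_inv_smul, dist_comm]
  exact le_antisymm (key y x) (key x y)

theorem orbDist_triangle (x y z : X) : orbDist G x z ≤ orbDist G x y + orbDist G y z := by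
  refine le_of_forall_pos_le_add fun ε hε => ?_
  obtain ⟨g, hg⟩ : ∃ g : G, dist x (g • y) < orbDist G x y + ε / 2 :=
    exists_lt_of_ciInf_lt (by change orbDist G x y < _; linarith)
  obtain ⟨h, hh⟩ : ∃ h : G, dist y (h • z) < orbDist G y z + ε / 2 :=
    exists_lt_of_ciInf_lt (by change orbDist G y z < _; linarith)
  calc orbDist G x z ≤ dist x ((g * h) • z) := orbDist_le G x z (g * h)
    _ ≤ dist x (g • y) + dist (g • y) ((g * h) • z) := dist_triangle _ _ _
    _ = dist x (g • y) + dist y (h • z) := by rw [mul_smul, dist_smul]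
    _ ≤ orbDist G x y + ε / 2 + (orbDist G y z + ε / 2) := by linarith
    _ = orbDist G x y + orbDist G y z + ε := by ring

theorem closure_orbit_mono {u v : X} (hu : u ∈ closure (MulAction.orbit G v)) :
    closure (MulAction.orbit G u) ⊆ closure (MulAction.orbit G v) := by
  refine closure_minimal ?_ isClosed_closure
  rintro _ ⟨g, rfl⟩
  have : g • u ∈ g • closure (MulAction.orbit G v) := Set.smul_mem_smul_set hu
  rwa [← closure_smul, MulAction.smul_orbit] at this

theorem closure_orbit_eq_of_orbDist_eq_zero {x y : X} (h : orbDist G x y = 0) :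
    closure (MulAction.orbit G x) = closure (MulAction.orbit G y) := by
  have hx : x ∈ closure (MulAction.orbit G y) := by
    rw [Metric.mem_closure_iff_infDist_zero (orbit_nonempty G y), ← orbDist_eq_infDist]
    exact h
  have hy : y ∈ closure (MulAction.orbit G x) := by
    rw [Metric.mem_closure_iff_infDist_zero (orbit_nonempty G x), ← orbDist_eq_infDist,
      ← orbDist_comm]
    exact h
  exact le_antisymm (closure_orbit_mono G hx) (closure_orbit_mono G hy)

variable (X) in
/-- Points of `X` are equivalent when they have the same orbit closure. -/
def orbSetoid : Setoid X :=
  ⟨fun x y => closure (MulAction.orbit G x) = closure (MulAction.orbit G y),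
    fun _ => rfl, Eq.symm, Eq.trans⟩

variable (X) in
/-- The space `X ⫽ G` of orbit closures. -/
abbrev OrbQuot : Type _ := Quotient (orbSetoid G X)

/-- The orbit closure of a point, as an element of `X ⫽ G`. -/
abbrev OrbQuot.mk (x : X) : OrbQuot G X := Quotient.mk (orbSetoid G X) x

theorem orbDist_congr {x x' y : X}
    (hx : closure (MulAction.orbit G x) = closure (MulAction.orbit G x')) :
    orbDist G x y = orbDist G x' y := by
  have key : ∀ u u' v : X, u ∈ closure (MulAction.orbit G u') →
      orbDist G u' v ≤ orbDist G u v := by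
    intro u u' v hu
    refine le_of_forall_pos_le_add fun ε hε => ?_
    obtain ⟨g, hg⟩ : ∃ g : G, dist u (g • v) < orbDist G u v + ε / 2 :=
      exists_lt_of_ciInf_lt (by change orbDist G u v < _; linarith)
    have h00 : orbDist G u' u = 0 := by
      rw [orbDist_comm, orbDist_eq_infDist,
        ← Metric.mem_closure_iff_infDist_zero (orbit_nonempty G u')]
      exact hu
    obtain ⟨h, hh⟩ : ∃ h : G, dist u' (h • u) < ε / 2 :=
      exists_lt_of_ciInf_lt (by change orbDist G u' u < _; rw [h00]; linarith)
    calc orbDist G u' v ≤ dist u' ((h * g) • v) := orbDist_le G u' v (h * g)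
      _ ≤ dist u' (h • u) + dist (h • u) ((h * g) • v) := dist_triangle _ _ _
      _ = dist u' (h • u) + dist u (g • v) := by rw [mul_smul, dist_smul]
      _ ≤ ε / 2 + (orbDist G u v + ε / 2) := by linarith
      _ = orbDist G u v + ε := by ring
  have h1 : x ∈ closure (MulAction.orbit G x') := by
    rw [← hx]; exact subset_closure (MulAction.mem_orbit_self x)
  have h2 : x' ∈ closure (MulAction.orbit G x) := by
    rw [hx]; exact subset_closure (MulAction.mem_orbit_self x')
  exact le_antisymm (key x' x y h2) (key x x' y h1)

noncomputable instance OrbQuot.metricSpace : MetricSpace (OrbQuot G X) where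
  dist p q := orbDist G p.out q.out
  dist_self p := orbDist_self G _
  dist_comm p q := orbDist_comm G _ _
  dist_triangle p q r := orbDist_triangle G _ _ _
  eq_of_dist_eq_zero {p q} h := by
    rw [← p.out_eq, ← q.out_eq]
    exact Quotient.sound (closure_orbit_eq_of_orbDist_eq_zero G h)

theorem OrbQuot.dist_mk (x y : X) :
    dist (OrbQuot.mk G x) (OrbQuot.mk G y) = orbDist G x y := by
  have hx : closure (MulAction.orbit G (Quotient.out (OrbQuot.mk G x))) =
      closure (MulAction.orbit G x) := Quotient.exact (Quotient.out_eq (OrbQuot.mk G x))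
  have hy : closure (MulAction.orbit G (Quotient.out (OrbQuot.mk G y))) =
      closure (MulAction.orbit G y) := Quotient.exact (Quotient.out_eq (OrbQuot.mk G y))
  calc dist (OrbQuot.mk G x) (OrbQuot.mk G y)
      = orbDist G (Quotient.out (OrbQuot.mk G x)) (Quotient.out (OrbQuot.mk G y)) := rfl
    _ = orbDist G x (Quotient.out (OrbQuot.mk G y)) := orbDist_congr G hx
    _ = orbDist G (Quotient.out (OrbQuot.mk G y)) x := orbDist_comm G _ _
    _ = orbDist G y x := orbDist_congr G hy
    _ = orbDist G x y := (orbDist_comm G _ _).symm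

/-- Subgroups act isometrically whenever the ambient group does. -/
instance Subgroup.isometricSMul (H : Subgroup G) : IsIsometricSMul H X :=
  ⟨fun h => isometry_smul X (h : G)⟩

end OrbitQuotient

section Uinfty

open scoped Classical

variable (G : Type*) {X : Type*} [Group G] [PseudoMetricSpace X] [MulAction G X]

/-- The distance between the `G`-orbit closures of the restrictions of two tuples to a set `I`
of indices. -/
noncomputable def dRest {n : ℕ} (I : Finset (Fin n)) (p q : OrbQuot G (Fin n → X)) : ℝ :=
  ⨅ g : G, ((I.sup fun i => nndist (p.out i) (g • q.out i) : NNReal) : ℝ)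

/-- The set `I(p, i, m)` of indices `j` such that the `i`-th and `j`-th coordinates of `p` are
at distance less than `2 ^ m`. -/
noncomputable def indexSet {n : ℕ} (p : OrbQuot G (Fin n → X)) (i : Fin n) (m : ℕ) :
    Finset (Fin n) :=
  Finset.univ.filter fun j => dist (p.out i) (p.out j) < 2 ^ m

/-- The basic entourages `U^∞_m` of the uniformity `𝓤^∞` on `Xⁿ ⫽ G`. -/
noncomputable def Uinf (n : ℕ) (m : ℕ) :
    Set (OrbQuot G (Fin n → X) × OrbQuot G (Fin n → X)) :=
  {pq | ∀ i : Fin n,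
    dRest G (indexSet G pq.1 i m) pq.1 pq.2 < (2 : ℝ) ^ (-(m : ℤ)) ∧
    dRest G (indexSet G pq.2 i m) pq.1 pq.2 < (2 : ℝ) ^ (-(m : ℤ))}

end Uinfty

section Helpers

open scoped Classical

variable (G : Type*) {X : Type*} [Group G] [PseudoMetricSpace X] [MulAction G X]

theorem sup_coe_lt {ι : Type*} (I : Finset ι) (f : ι → NNReal) {c : ℝ} (hc : 0 < c) :
    ((I.sup f : NNReal) : ℝ) < c ↔ ∀ j ∈ I, (f j : ℝ) < c := by
  set c' : NNReal := ⟨c, hc.le⟩ with hc'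
  have hcc : (c' : ℝ) = c := rfl
  rw [← hcc, NNReal.coe_lt_coe,
    Finset.sup_lt_iff (show ⊥ < c' by exact_mod_cast hc)]
  refine ⟨fun h j hj => NNReal.coe_lt_coe.mpr (h j hj), fun h j hj => ?_⟩
  rw [← NNReal.coe_lt_coe, hcc]
  exact h j hj

theorem dRest_nonneg {n : ℕ} (I : Finset (Fin n)) (p q : OrbQuot G (Fin n → X)) :
    0 ≤ dRest G I p q :=
  Real.iInf_nonneg fun _ => NNReal.coe_nonneg _

theorem dRest_le' {n : ℕ} (I : Finset (Fin n)) (p q : OrbQuot G (Fin n → X)) (g : G) :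
    dRest G I p q ≤ ((I.sup fun i => nndist (p.out i) (g • q.out i) : NNReal) : ℝ) :=
  ciInf_le ⟨0, by rintro r ⟨g, rfl⟩; exact NNReal.coe_nonneg _⟩ g

theorem dRest_lt_iff {n : ℕ} {I : Finset (Fin n)} {p q : OrbQuot G (Fin n → X)} {c : ℝ}
    (hc : 0 < c) :
    dRest G I p q < c ↔ ∃ g : G, ∀ j ∈ I, dist (p.out j) (g • q.out j) < c := by
  constructor
  · intro h
    obtain ⟨g, hg⟩ := exists_lt_of_ciInf_lt h
    refine ⟨g, fun j hj => ?_⟩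
    have := (sup_coe_lt I _ hc).mp hg j hj
    simpa using this
  · rintro ⟨g, hg⟩
    refine lt_of_le_of_lt (dRest_le' G I p q g) ((sup_coe_lt I _ hc).mpr ?_)
    intro j hj
    simpa using hg j hj

theorem dRest_mono {n : ℕ} {I J : Finset (Fin n)} (hIJ : I ⊆ J)
    (p q : OrbQuot G (Fin n → X)) : dRest G I p q ≤ dRest G J p q := by
  refine le_ciInf fun g => (dRest_le' G I p q g).trans ?_
  exact_mod_cast Finset.sup_mono hIJ

variable [IsIsometricSMul G X]

theorem dRest_comm {n : ℕ} (I : Finset (Fin n)) (p q : OrbQuot G (Fin n → X)) :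
    dRest G I p q = dRest G I q p := by
  have key : ∀ p q : OrbQuot G (Fin n → X), dRest G I q p ≤ dRest G I p q := by
    intro p q
    refine le_ciInf fun g => ?_
    refine le_of_le_of_eq (dRest_le' G I q p g⁻¹) ?_
    congr 1
    refine Finset.sup_congr rfl fun j _ => ?_
    calc nndist (q.out j) (g⁻¹ • p.out j)
        = nndist (g • q.out j) (g • g⁻¹ • p.out j) :=
          ((isometry_smul X g).nndist_eq _ _).symm
      _ = nndist (p.out j) (g • q.out j) := by rw [smul_inv_smul, nndist_comm]
  exact le_antisymm (key q p) (key p q)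

theorem dist_eq_dRest_univ {n : ℕ} (p q : OrbQuot G (Fin n → X)) :
    dist p q = dRest G Finset.univ p q := by
  show orbDist G p.out q.out = _
  unfold orbDist dRest
  refine iInf_congr fun g => ?_
  rw [dist_pi_def]
  simp [Pi.smul_apply]

theorem mem_indexSet_self {n : ℕ} (p : OrbQuot G (Fin n → X)) (i : Fin n) (m : ℕ) :
    i ∈ indexSet G p i m := by
  simp only [indexSet, Finset.mem_filter, Finset.mem_univ, true_and, dist_self]
  positivity

theorem indexSet_mono {n : ℕ} (p : OrbQuot G (Fin n → X)) (i : Fin n) {m m' : ℕ}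
    (h : m ≤ m') : indexSet G p i m ⊆ indexSet G p i m' := by
  intro j hj
  simp only [indexSet, Finset.mem_filter, Finset.mem_univ, true_and] at hj ⊢
  refine hj.trans_le ?_
  exact pow_le_pow_right₀ one_le_two h

theorem Uinf_symm {n m : ℕ} {p q : OrbQuot G (Fin n → X)} (h : (p, q) ∈ Uinf G n m) :
    (q, p) ∈ Uinf G n m := by
  intro i
  obtain ⟨h1, h2⟩ := h i
  exact ⟨by rw [dRest_comm]; exact h2, by rw [dRest_comm]; exact h1⟩

theorem zpow_neg_succ (m : ℕ) :
    (2 : ℝ) ^ (-((m : ℕ) + 1 : ℕ) : ℤ) = (2 : ℝ) ^ (-(m : ℤ)) / 2 := by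
  push_cast
  rw [neg_add, zpow_add₀ (two_ne_zero), zpow_neg_one]
  ring

theorem comp_aux {n m : ℕ} {p q r : OrbQuot G (Fin n → X)}
    (hpq : (p, q) ∈ Uinf G n (m + 1)) (hqr : (q, r) ∈ Uinf G n (m + 1)) (i : Fin n) :
    dRest G (indexSet G p i m) p r < (2 : ℝ) ^ (-(m : ℤ)) := by
  set ε : ℝ := (2 : ℝ) ^ (-((m + 1 : ℕ) : ℤ)) with hεdef
  have hε0 : 0 < ε := by positivity
  have hεval : ε = (2 : ℝ) ^ (-(m : ℤ)) / 2 := zpow_neg_succ m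
  have hεm : (2 : ℝ) ^ (-(m : ℤ)) = ε + ε := by rw [hεval]; ring
  have hεle1 : ε ≤ 1 / 2 := by
    rw [hεval]
    have : (2 : ℝ) ^ (-(m : ℤ)) ≤ 1 := by
      apply zpow_le_one_of_nonpos₀ one_le_two
      omega
    linarith
  -- from hpq
  obtain ⟨g, hg⟩ := (dRest_lt_iff G hε0).mp (hpq i).1
  -- indexSet p i m ⊆ indexSet q i (m+1)
  have hsub : indexSet G p i m ⊆ indexSet G q i (m + 1) := by
    intro j hj
    have hji : dist (p.out i) (p.out j) < 2 ^ m := by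
      simpa only [indexSet, Finset.mem_filter, Finset.mem_univ, true_and] using hj
    have hj' : j ∈ indexSet G p i (m + 1) :=
      indexSet_mono G p i (Nat.le_succ m) hj
    have hi' : i ∈ indexSet G p i (m + 1) := mem_indexSet_self G p i (m + 1)
    have h1 := hg i hi'
    have h2 := hg j hj'
    simp only [indexSet, Finset.mem_filter, Finset.mem_univ, true_and]
    have hqq : dist (q.out i) (q.out j) = dist (g • q.out i) (g • q.out j) :=
      ((isometry_smul X g).dist_eq _ _).symm
    have hchain : dist (g • q.out i) (g • q.out j) ≤
        dist (g • q.out i) (p.out i) + dist (p.out i) (p.out j) +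
          dist (p.out j) (g • q.out j) := dist_triangle4 _ _ _ _
    have h2pow : (2 : ℝ) ^ m + 1 ≤ 2 ^ (m + 1) := by
      have h1le : (1 : ℝ) ≤ 2 ^ m := one_le_pow₀ one_le_two
      rw [pow_succ]
      linarith
    rw [hqq]
    have := dist_comm (p.out i) (g • q.out i)
    calc dist (g • q.out i) (g • q.out j) ≤
        dist (g • q.out i) (p.out i) + dist (p.out i) (p.out j) +
          dist (p.out j) (g • q.out j) := hchain
      _ < ε + 2 ^ m + ε := by
          rw [dist_comm (g • q.out i) (p.out i)]
          gcongr
      _ ≤ 2 ^ m + 1 := by linarith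
      _ ≤ 2 ^ (m + 1) := h2pow
  -- from hqr
  obtain ⟨h, hh⟩ := (dRest_lt_iff G hε0).mp (hqr i).1
  rw [dRest_lt_iff G (by positivity)]
  refine ⟨g * h, fun j hj => ?_⟩
  have h1 := hg j (indexSet_mono G p i (Nat.le_succ m) hj)
  have h2 := hh j (hsub hj)
  calc dist (p.out j) ((g * h) • r.out j)
      ≤ dist (p.out j) (g • q.out j) + dist (g • q.out j) ((g * h) • r.out j) :=
        dist_triangle _ _ _
    _ = dist (p.out j) (g • q.out j) + dist (q.out j) (h • r.out j) := by
        rw [mul_smul, (isometry_smul X g).dist_eq]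
    _ < ε + ε := by gcongr
    _ = (2 : ℝ) ^ (-(m : ℤ)) := hεm.symm

end Helpers

/-- The sets `U^∞_m` are symmetric, decreasing with intersection the
diagonal, and satisfy `U^∞_{m+1} ∘ U^∞_{m+1} ⊆ U^∞_m`. -/
theorem statement9 (G X : Type*) [Group G] [MetricSpace X] [MulAction G X]
    [IsIsometricSMul G X] (n : ℕ) :
    (∀ (m : ℕ) (p q : OrbQuot G (Fin n → X)),
      (p, q) ∈ Uinf G n m ↔ (q, p) ∈ Uinf G n m) ∧
    (∀ m : ℕ, Uinf (X := X) G n (m + 1) ⊆ Uinf (X := X) G n m) ∧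
    (⋂ m : ℕ, Uinf (X := X) G n m) = Set.diagonal (OrbQuot G (Fin n → X)) ∧
    (∀ m : ℕ, SetRel.comp (Uinf (X := X) G n (m + 1)) (Uinf (X := X) G n (m + 1)) ⊆
      Uinf (X := X) G n m) := by
  refine ⟨fun m p q => ⟨Uinf_symm G, Uinf_symm G⟩, ?_, ?_, ?_⟩
  · -- decreasing
    rintro m ⟨p, q⟩ h i
    have hb : (2 : ℝ) ^ (-((m + 1 : ℕ) : ℤ)) ≤ (2 : ℝ) ^ (-(m : ℤ)) := by
      rw [zpow_neg_succ m]
      have : (0 : ℝ) < (2 : ℝ) ^ (-(m : ℤ)) := by positivity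
      linarith
    obtain ⟨h1, h2⟩ := h i
    constructor
    · exact lt_of_le_of_lt
        (dRest_mono G (indexSet_mono G p i (Nat.le_succ m)) p q)
        (h1.trans_le hb)
    · exact lt_of_le_of_lt
        (dRest_mono G (indexSet_mono G q i (Nat.le_succ m)) p q)
        (h2.trans_le hb)
  · -- intersection is the diagonal
    ext ⟨p, q⟩
    simp only [Set.mem_iInter, Set.mem_diagonal_iff]
    constructor
    · intro h
      rcases Nat.eq_zero_or_pos n with hn | hn
      · subst hn
        haveI : Subsingleton (Fin 0 → X) := ⟨fun a b => funext fun i => i.elim0⟩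
        exact Subsingleton.elim p q
      · have i0 : Fin n := ⟨0, hn⟩
        -- find m₀ such that all coordinates of p.out are within 2^m₀ of p.out i0
        obtain ⟨m₀, hm₀⟩ : ∃ m₀ : ℕ,
            ∀ j : Fin n, dist (p.out i0) (p.out j) < 2 ^ m₀ := by
          obtain ⟨M, hM⟩ : ∃ M : ℝ, ∀ j : Fin n, dist (p.out i0) (p.out j) ≤ M :=
            ⟨Finset.univ.sup' ⟨i0, Finset.mem_univ i0⟩
              (fun j => dist (p.out i0) (p.out j)),
              fun j => Finset.le_sup' (fun j => dist (p.out i0) (p.out j))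
                (Finset.mem_univ j)⟩
          obtain ⟨m₀, hm₀⟩ := pow_unbounded_of_one_lt M (one_lt_two (α := ℝ))
          exact ⟨m₀, fun j => (hM j).trans_lt hm₀⟩
        have huniv : ∀ m : ℕ, m₀ ≤ m → indexSet G p i0 m = Finset.univ := by
          intro m hm
          refine Finset.eq_univ_iff_forall.mpr fun j => ?_
          simp only [indexSet, Finset.mem_filter, Finset.mem_univ, true_and]
          exact (hm₀ j).trans_le (pow_le_pow_right₀ one_le_two hm)
        have key : ∀ ε : ℝ, 0 < ε → dist p q < ε := by
          intro ε hε
          obtain ⟨m₁, hm₁⟩ := exists_pow_lt_of_lt_one hε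
            (by norm_num : (1 : ℝ) / 2 < 1)
          set m := max m₀ m₁ with hm
          have hu := huniv m (le_max_left _ _)
          have h1 := (h m i0).1
          rw [hu] at h1
          rw [dist_eq_dRest_univ G p q]
          refine h1.trans (lt_of_le_of_lt ?_ hm₁)
          have : ((1 : ℝ) / 2) ^ m ≤ (1 / 2) ^ m₁ :=
            pow_le_pow_of_le_one (by norm_num) (by norm_num) (le_max_right _ _)
          refine le_trans (le_of_eq ?_) this
          rw [one_div, inv_pow, ← zpow_natCast, ← zpow_neg]
        have : dist p q ≤ 0 := le_of_forall_pos_lt_add fun ε hε => by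
          simpa using key ε hε
        exact eq_of_dist_eq_zero (le_antisymm this dist_nonneg)
    · rintro rfl
      intro m i
      have hz : dRest G (indexSet G p i m) p p < (2 : ℝ) ^ (-(m : ℤ)) := by
        rw [dRest_lt_iff G (by positivity)]
        exact ⟨1, fun j _ => by simp only [one_smul, dist_self]; positivity⟩
      exact ⟨hz, hz⟩
  · -- composition
    rintro m ⟨p, r⟩ ⟨q, hpq, hqr⟩ i
    refine ⟨comp_aux G hpq hqr i, ?_⟩
    rw [dRest_comm]
    exact comp_aux G (Uinf_symm G hqr) (Uinf_symm G hpq) i
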